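/- The tree T = G(3, 16, 3), which has n = 244 vertices and total domination number γ_t = 97, satisfies Γ_t(T) > ((n − γ_t/2)/(γ_t/2))^{γ_t/2} = (391/97)^{97/2}. Equivalently, its number 3·(4^16 − 3^16)^3 of minimum total dominating sets exceeds (391/97)^{97/2}. (This disproves the conjecture of Henning, Mohr and Rautenbach that every tree of order n ≥ 2 satisfies Γ_t(T) ≤ ((n − γ_t/2)/(γ_t/2))^{γ_t/2}.) -/

import Mathlib

/-- A set `D` of vertices is a total dominating set if every vertex has a neighbour in `D`. -/
def IsTotalDominatingSet {V : Type*} (G : SimpleGraph V) (D : Finset V) : Prop :=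
  ∀ v : V, ∃ w ∈ D, G.Adj v w

/-- The total domination number: the minimum size of a total dominating set. -/
noncomputable def totalDominationNumber {V : Type*} [Fintype V] (G : SimpleGraph V) : ℕ :=
  sInf {n | ∃ D : Finset V, IsTotalDominatingSet G D ∧ D.card = n}

/-- The number of minimum total dominating sets. -/
noncomputable def numMinTotalDomSets {V : Type*} [Fintype V] (G : SimpleGraph V) : ℕ :=
  Set.ncard {D : Finset V | IsTotalDominatingSet G D ∧ D.card = totalDominationNumber G}

/-- The tree `G(k,l,m)`: root `y`, children `x_a` (`a : Fin k`), grandchildren `w_{a,b}`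
(`b : Fin l`), each `w_{a,b}` with a single child `v_{a,b}`, each `v_{a,b}` with `m` leaves
`u_{a,b,c}` (`c : Fin m`). -/
def Gklm (k l m : ℕ) :
    SimpleGraph (Unit ⊕ (Fin k ⊕ ((Fin k × Fin l) ⊕ ((Fin k × Fin l) ⊕ (Fin k × Fin l × Fin m))))) :=
  SimpleGraph.fromRel (fun p q =>
    (∃ a : Fin k, p = Sum.inl () ∧ q = Sum.inr (Sum.inl a)) ∨
    (∃ (a : Fin k) (b : Fin l),
      p = Sum.inr (Sum.inl a) ∧ q = Sum.inr (Sum.inr (Sum.inl (a, b)))) ∨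
    (∃ (a : Fin k) (b : Fin l),
      p = Sum.inr (Sum.inr (Sum.inl (a, b))) ∧
      q = Sum.inr (Sum.inr (Sum.inr (Sum.inl (a, b))))) ∨
    (∃ (a : Fin k) (b : Fin l) (c : Fin m),
      p = Sum.inr (Sum.inr (Sum.inr (Sum.inl (a, b)))) ∧
      q = Sum.inr (Sum.inr (Sum.inr (Sum.inr (a, b, c))))))

/-! A total dominating set meets the open neighbourhood of every vertex. Call `y`, the `v_{a,b}`
and one leaf `u_{a,b,0}` under each `v_{a,b}` hubs: their neighbourhoods are `2kl + 1` pairwise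
disjoint sets avoiding `y`, so `γₜ ≥ 2kl + 1`, and a total dominating set of that size contains
exactly one vertex of each hub neighbourhood and not `y`. Hence the minimum ones consist of one
`x_a`, all `v_{a,b}`, and for each `(a, b)` either `w_{a,b}` or one leaf `u_{a,b,c}`, such that
every `a` has some `w_{a,b}` chosen (to dominate `x_a`). This gives `Γₜ = k ((m + 1)^l − m^l)^k`;
for `(k, l, m) = (3, 16, 3)` comparing squares settles the inequality. -/

open Finset

theorem Nat.card_exists_apply_eq_none (ι α : Type*) [Fintype ι] [Fintype α] :
    Nat.card {g : ι → Option α // ∃ i, g i = none} =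
      (Fintype.card α + 1) ^ Fintype.card ι - Fintype.card α ^ Fintype.card ι := by
  classical
  have hsome : {g : ι → Option α // ∀ i, (g i).isSome} ≃ (ι → α) :=
    Equiv.subtypePiEquivPi.trans (Equiv.piCongrRight fun _ => Equiv.optionIsSomeEquiv α)
  have hcompl := Fintype.card_subtype_compl fun g : ι → Option α => ∀ i, (g i).isSome
  simp only [Fintype.card_congr hsome, Fintype.card_fun, Fintype.card_option] at hcompl
  rw [← hcompl, Nat.card_eq_fintype_card]
  exact Fintype.card_congr (Equiv.subtypeEquivRight fun g => by simp)

theorem Nat.card_forall_exists_apply_eq_none (κ ι α : Type*) [Fintype κ] [Fintype ι]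
    [Fintype α] :
    Nat.card {f : κ → ι → Option α // ∀ a, ∃ i, f a i = none} =
      ((Fintype.card α + 1) ^ Fintype.card ι - Fintype.card α ^ Fintype.card ι) ^
        Fintype.card κ := by
  rw [Nat.card_congr
      (Equiv.subtypePiEquivPi (p := fun _ (g : ι → Option α) => ∃ i, g i = none)),
    Nat.card_pi, prod_const, Nat.card_exists_apply_eq_none, Finset.card_univ]

theorem Real.rpow_div_two_lt_of_pow_lt_sq {x y : ℝ} {n : ℕ} (hx : 0 ≤ x) (hy : 0 ≤ y)
    (h : x ^ n < y ^ 2) : x ^ ((n : ℝ) / 2) < y := by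
  refine lt_of_pow_lt_pow_left₀ 2 hy ?_
  rwa [← Real.rpow_natCast, ← Real.rpow_mul hx, Nat.cast_ofNat, div_mul_cancel₀ _ two_ne_zero,
    Real.rpow_natCast]

section TotalDomination

variable {V ι : Type*} [Fintype ι] {G : SimpleGraph V} {D : Finset V}

theorem totalDominationNumber_eq_of_forall_le [Fintype V] {n : ℕ}
    (hD : IsTotalDominatingSet G D) (hcard : #D = n)
    (hmin : ∀ D, IsTotalDominatingSet G D → n ≤ #D) :
    totalDominationNumber G = n :=
  le_antisymm (Nat.sInf_le ⟨D, hD, hcard⟩) (le_csInf ⟨n, D, hD, hcard⟩ (by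
    rintro _ ⟨D', hD', rfl⟩
    exact hmin D' hD'))

namespace IsTotalDominatingSet

theorem exists_embedding (hD : IsTotalDominatingSet G D) (t : ι → V)
    (ht : ∀ i j z, G.Adj (t i) z → G.Adj (t j) z → i = j) :
    ∃ g : ι ↪ V, univ.map g ⊆ D ∧ ∀ i, G.Adj (t i) (g i) := by
  choose g hgD hadj using fun i => hD (t i)
  refine ⟨⟨g, fun i j hij => ht i j (g i) (hadj i) (hij ▸ hadj j)⟩, ?_, hadj⟩
  rintro _ hz
  obtain ⟨i, -, rfl⟩ := mem_map.1 hz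
  exact hgD i

theorem card_le (hD : IsTotalDominatingSet G D) (t : ι → V)
    (ht : ∀ i j z, G.Adj (t i) z → G.Adj (t j) z → i = j) : Fintype.card ι ≤ #D := by
  obtain ⟨g, hgD, -⟩ := hD.exists_embedding t ht
  simpa using card_le_card hgD

theorem eq_map_of_card_eq (hD : IsTotalDominatingSet G D) (t : ι → V)
    (ht : ∀ i j z, G.Adj (t i) z → G.Adj (t j) z → i = j)
    (hcard : #D = Fintype.card ι) :
    ∃ g : ι ↪ V, D = univ.map g ∧ ∀ i, G.Adj (t i) (g i) := by
  obtain ⟨g, hgD, hadj⟩ := hD.exists_embedding t ht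
  exact ⟨g, (eq_of_subset_of_card_le hgD (by simp [hcard])).symm, hadj⟩

theorem exists_adj_of_card_eq (hD : IsTotalDominatingSet G D) (t : ι → V)
    (ht : ∀ i j z, G.Adj (t i) z → G.Adj (t j) z → i = j)
    (hcard : #D = Fintype.card ι) {z : V} (hz : z ∈ D) :
    ∃ i, G.Adj (t i) z := by
  obtain ⟨g, rfl, hadj⟩ := hD.eq_map_of_card_eq t ht hcard
  obtain ⟨i, -, rfl⟩ := mem_map.1 hz
  exact ⟨i, hadj i⟩

theorem eq_of_card_eq (hD : IsTotalDominatingSet G D) (t : ι → V)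
    (ht : ∀ i j z, G.Adj (t i) z → G.Adj (t j) z → i = j)
    (hcard : #D = Fintype.card ι) {i : ι} {z z' : V} (hz : z ∈ D)
    (hz' : z' ∈ D) (hadj : G.Adj (t i) z) (hadj' : G.Adj (t i) z') : z = z' := by
  obtain ⟨g, rfl, hgadj⟩ := hD.eq_map_of_card_eq t ht hcard
  obtain ⟨j, -, rfl⟩ := mem_map.1 hz
  obtain ⟨j', -, rfl⟩ := mem_map.1 hz'
  rw [← ht i j _ hadj (hgadj j), ← ht i j' _ hadj' (hgadj j')]

end IsTotalDominatingSet

end TotalDomination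

namespace Gklm

abbrev Vertex (k l m : ℕ) :=
  Unit ⊕ (Fin k ⊕ ((Fin k × Fin l) ⊕ ((Fin k × Fin l) ⊕ (Fin k × Fin l × Fin m))))

variable {k l m : ℕ}

def y : Vertex k l m := Sum.inl ()

def x (a : Fin k) : Vertex k l m := Sum.inr (Sum.inl a)

def w (a : Fin k) (b : Fin l) : Vertex k l m := Sum.inr (Sum.inr (Sum.inl (a, b)))

def v (a : Fin k) (b : Fin l) : Vertex k l m := Sum.inr (Sum.inr (Sum.inr (Sum.inl (a, b))))

def u (a : Fin k) (b : Fin l) (c : Fin m) : Vertex k l m :=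
  Sum.inr (Sum.inr (Sum.inr (Sum.inr (a, b, c))))

theorem adj_y_iff (z : Vertex k l m) : (Gklm k l m).Adj y z ↔ ∃ a, z = x a := by
  rcases z with _ | _ | _ | _ | _ <;> simp [Gklm, y, x]

theorem adj_x_iff (a : Fin k) (z : Vertex k l m) :
    (Gklm k l m).Adj (x a) z ↔ z = y ∨ ∃ b, z = w a b := by
  rcases z with _ | _ | ⟨_, _⟩ | _ | _ <;> simp [Gklm, y, x, w]

theorem adj_w_iff (a : Fin k) (b : Fin l) (z : Vertex k l m) :
    (Gklm k l m).Adj (w a b) z ↔ z = x a ∨ z = v a b := by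
  rcases z with _ | _ | ⟨_, _⟩ | ⟨_, _⟩ | _ <;> simp [Gklm, x, w, v] <;> tauto

theorem adj_v_iff (a : Fin k) (b : Fin l) (z : Vertex k l m) :
    (Gklm k l m).Adj (v a b) z ↔ z = w a b ∨ ∃ c, z = u a b c := by
  rcases z with _ | _ | ⟨_, _⟩ | ⟨_, _⟩ | ⟨_, _, _⟩ <;> simp [Gklm, w, v, u]
  tauto

theorem adj_u_iff (a : Fin k) (b : Fin l) (c : Fin m) (z : Vertex k l m) :
    (Gklm k l m).Adj (u a b c) z ↔ z = v a b := by
  rcases z with _ | _ | ⟨_, _⟩ | ⟨_, _⟩ | ⟨_, _, _⟩ <;> simp [Gklm, v, u]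

theorem x_injective : Function.Injective (x : Fin k → Vertex k l m) := fun _ _ h => by
  simpa [x] using h

theorem isTotalDominatingSet_iff [NeZero m] {D : Finset (Vertex k l m)} :
    IsTotalDominatingSet (Gklm k l m) D ↔
      (∃ a, x a ∈ D) ∧ (∀ a, y ∈ D ∨ ∃ b, w a b ∈ D) ∧
        (∀ a b, w a b ∈ D ∨ ∃ c, u a b c ∈ D) ∧ ∀ a b, v a b ∈ D := by
  constructor
  · intro hD
    refine ⟨?_, fun a => ?_, fun a b => ?_, fun a b => ?_⟩
    · obtain ⟨_, hz, hadj⟩ := hD y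
      obtain ⟨a, rfl⟩ := (adj_y_iff _).1 hadj
      exact ⟨a, hz⟩
    · obtain ⟨_, hz, hadj⟩ := hD (x a)
      obtain rfl | ⟨b, rfl⟩ := (adj_x_iff a _).1 hadj
      exacts [Or.inl hz, Or.inr ⟨b, hz⟩]
    · obtain ⟨_, hz, hadj⟩ := hD (v a b)
      obtain rfl | ⟨c, rfl⟩ := (adj_v_iff a b _).1 hadj
      exacts [Or.inl hz, Or.inr ⟨c, hz⟩]
    · obtain ⟨_, hz, hadj⟩ := hD (u a b 0)
      rwa [(adj_u_iff a b 0 _).1 hadj] at hz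
  · rintro ⟨⟨a₀, hx₀⟩, hxy, hvw, hv⟩ (_ | a | ⟨a, b⟩ | ⟨a, b⟩ | ⟨a, b, c⟩)
    · exact ⟨x a₀, hx₀, (adj_y_iff _).2 ⟨a₀, rfl⟩⟩
    · obtain hy | ⟨b, hw⟩ := hxy a
      exacts [⟨y, hy, (adj_x_iff a _).2 (Or.inl rfl)⟩,
        ⟨w a b, hw, (adj_x_iff a _).2 (Or.inr ⟨b, rfl⟩)⟩]
    · exact ⟨v a b, hv a b, (adj_w_iff a b _).2 (Or.inr rfl)⟩
    · obtain hw | ⟨c, hu⟩ := hvw a b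
      exacts [⟨w a b, hw, (adj_v_iff a b _).2 (Or.inl rfl)⟩,
        ⟨u a b c, hu, (adj_v_iff a b _).2 (Or.inr ⟨c, rfl⟩)⟩]
    · exact ⟨v a b, hv a b, (adj_u_iff a b c _).2 rfl⟩

abbrev Hub (k l : ℕ) := (Fin k × Fin l) ⊕ (Fin k × Fin l) ⊕ Unit

theorem card_hub : Fintype.card (Hub k l) = 2 * k * l + 1 := by
  simp only [Fintype.card_sum, Fintype.card_prod, Fintype.card_fin, Fintype.card_unit]
  ring

def hub [NeZero m] : Hub k l → Vertex k l m
  | .inl (a, b) => u a b 0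
  | .inr (.inl (a, b)) => v a b
  | .inr (.inr ()) => y

theorem hub_adj_injective [NeZero m] (i j : Hub k l) (z : Vertex k l m)
    (hi : (Gklm k l m).Adj (hub i) z) (hj : (Gklm k l m).Adj (hub j) z) : i = j := by
  rcases i with ⟨a, b⟩ | ⟨a, b⟩ | _ <;> rcases j with ⟨a', b'⟩ | ⟨a', b'⟩ | _ <;>
    simp only [hub, adj_u_iff, adj_v_iff, adj_y_iff] at hi hj <;>
    aesop (add norm [y, x, w, v, u])

theorem two_mul_mul_add_one_le_card [NeZero m] {D : Finset (Vertex k l m)}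
    (hD : IsTotalDominatingSet (Gklm k l m) D) : 2 * k * l + 1 ≤ #D :=
  card_hub (k := k) ▸ hD.card_le hub hub_adj_injective

section Minimum

variable [NeZero m] {D : Finset (Vertex k l m)} (hD : IsTotalDominatingSet (Gklm k l m) D)
  (hcard : #D = 2 * k * l + 1)
include hD hcard

theorem y_notMem_of_card_eq : y ∉ D := by
  intro hy
  obtain ⟨(⟨a, b⟩ | ⟨a, b⟩ | _), hadj⟩ :=
    hD.exists_adj_of_card_eq hub hub_adj_injective (hcard.trans card_hub.symm) hy
  all_goals
    simp only [hub, adj_u_iff, adj_v_iff, adj_y_iff] at hadj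
    simp [y, x, w, v, u] at hadj

theorem eq_of_adj_hub_of_card_eq {i : Hub k l} {z z' : Vertex k l m} (hz : z ∈ D)
    (hz' : z' ∈ D) (hadj : (Gklm k l m).Adj (hub i) z) (hadj' : (Gklm k l m).Adj (hub i) z') :
    z = z' :=
  hD.eq_of_card_eq hub hub_adj_injective (hcard.trans card_hub.symm) hz hz' hadj hadj'

end Minimum

def wOrU (a : Fin k) (b : Fin l) : Option (Fin m) → Vertex k l m
  | none => w a b
  | some c => u a b c

theorem wOrU_injective (a : Fin k) (b : Fin l) : Function.Injective (wOrU (m := m) a b) := by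
  rintro (_ | _) (_ | _) h <;> simp_all [wOrU, w, u]

theorem adj_v_wOrU (a : Fin k) (b : Fin l) (o : Option (Fin m)) :
    (Gklm k l m).Adj (v a b) (wOrU a b o) := by
  cases o <;> simp [wOrU, adj_v_iff]

theorem exists_wOrU_mem_iff {D : Finset (Vertex k l m)} {a : Fin k} {b : Fin l} :
    (∃ o, wOrU a b o ∈ D) ↔ w a b ∈ D ∨ ∃ c, u a b c ∈ D := by
  simp [Option.exists, wOrU]

def minTDS (a₀ : Fin k) (f : Fin k → Fin l → Option (Fin m)) : Finset (Vertex k l m) :=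
  insert (x a₀) (univ.image (fun p : Fin k × Fin l => v p.1 p.2) ∪
    univ.image fun p : Fin k × Fin l => wOrU p.1 p.2 (f p.1 p.2))

variable {a₀ : Fin k} {f : Fin k → Fin l → Option (Fin m)}

theorem x_mem_minTDS : x a₀ ∈ minTDS a₀ f := mem_insert_self _ _

theorem v_mem_minTDS (a : Fin k) (b : Fin l) : v a b ∈ minTDS a₀ f :=
  mem_insert_of_mem (mem_union_left _ (mem_image_of_mem _ (mem_univ (a, b))))

theorem wOrU_mem_minTDS (a : Fin k) (b : Fin l) : wOrU a b (f a b) ∈ minTDS a₀ f :=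
  mem_insert_of_mem (mem_union_right _ (mem_image_of_mem (fun p => wOrU p.1 p.2 (f p.1 p.2))
    (mem_univ (a, b))))

theorem card_minTDS_le : #(minTDS a₀ f) ≤ 2 * k * l + 1 := by
  grw [minTDS, card_insert_le, card_union_le, card_image_le, card_image_le]
  simp only [card_univ, Fintype.card_prod, Fintype.card_fin]
  linarith

theorem isTotalDominatingSet_minTDS [NeZero m] (hf : ∀ a, ∃ b, f a b = none) :
    IsTotalDominatingSet (Gklm k l m) (minTDS a₀ f) := by
  refine isTotalDominatingSet_iff.2 ⟨⟨a₀, x_mem_minTDS⟩, fun a => Or.inr ?_,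
    fun a b => exists_wOrU_mem_iff.1 ⟨f a b, wOrU_mem_minTDS a b⟩, v_mem_minTDS⟩
  obtain ⟨b, hb⟩ := hf a
  exact ⟨b, by simpa only [hb, wOrU] using wOrU_mem_minTDS (a₀ := a₀) (f := f) a b⟩

theorem card_minTDS [NeZero m] (hf : ∀ a, ∃ b, f a b = none) :
    #(minTDS a₀ f) = 2 * k * l + 1 :=
  card_minTDS_le.antisymm (two_mul_mul_add_one_le_card (isTotalDominatingSet_minTDS hf))

theorem minTDS_injective [NeZero m] {a₁ : Fin k} {g : Fin k → Fin l → Option (Fin m)}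
    (hf : ∀ a, ∃ b, f a b = none) (h : minTDS a₀ f = minTDS a₁ g) :
    a₀ = a₁ ∧ f = g := by
  have hD := isTotalDominatingSet_minTDS (a₀ := a₀) hf
  have hcard := card_minTDS (a₀ := a₀) hf
  refine ⟨x_injective (eq_of_adj_hub_of_card_eq hD hcard (i := .inr (.inr ())) x_mem_minTDS
    (h ▸ x_mem_minTDS) ((adj_y_iff _).2 ⟨a₀, rfl⟩) ((adj_y_iff _).2 ⟨a₁, rfl⟩)), ?_⟩
  funext a b
  exact wOrU_injective a b (eq_of_adj_hub_of_card_eq hD hcard (i := .inr (.inl (a, b)))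
    (wOrU_mem_minTDS a b) (h ▸ wOrU_mem_minTDS a b) (adj_v_wOrU a b _) (adj_v_wOrU a b _))

theorem exists_eq_minTDS [NeZero m] {D : Finset (Vertex k l m)}
    (hD : IsTotalDominatingSet (Gklm k l m) D) (hcard : #D = 2 * k * l + 1) :
    ∃ a₀ f, (∀ a, ∃ b, f a b = none) ∧ minTDS a₀ f = D := by
  obtain ⟨⟨a₀, hx₀⟩, hxy, hvw, hv⟩ := isTotalDominatingSet_iff.1 hD
  choose f hf using fun a b => exists_wOrU_mem_iff.2 (hvw a b)
  have hfD : minTDS a₀ f ⊆ D := by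
    intro z hz
    simp only [minTDS, mem_insert, mem_union, mem_image, mem_univ, true_and] at hz
    obtain rfl | ⟨⟨a, b⟩, rfl⟩ | ⟨⟨a, b⟩, rfl⟩ := hz
    exacts [hx₀, hv a b, hf a b]
  have hadm : ∀ a, ∃ b, f a b = none := by
    intro a
    obtain ⟨b, hw⟩ := (hxy a).resolve_left (y_notMem_of_card_eq hD hcard)
    exact ⟨b, wOrU_injective a b (eq_of_adj_hub_of_card_eq hD hcard (i := .inr (.inl (a, b)))
      (hf a b) hw (adj_v_wOrU a b _) (adj_v_wOrU a b none))⟩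
  exact ⟨a₀, f, hadm, eq_of_subset_of_card_le hfD (by rw [hcard, card_minTDS hadm])⟩

noncomputable def minTDSEquiv [NeZero m] :
    Fin k × {f : Fin k → Fin l → Option (Fin m) // ∀ a, ∃ b, f a b = none} ≃
      {D : Finset (Vertex k l m) // IsTotalDominatingSet (Gklm k l m) D ∧ #D = 2 * k * l + 1} :=
  Equiv.ofBijective
    (fun p => ⟨minTDS p.1 p.2.1, isTotalDominatingSet_minTDS p.2.2, card_minTDS p.2.2⟩)
    ⟨fun ⟨a₀, f, hf⟩ ⟨a₁, g, _⟩ h => by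
      obtain ⟨rfl, rfl⟩ := minTDS_injective hf (congrArg Subtype.val h)
      rfl,
    fun ⟨_, hD, hcard⟩ => by
      obtain ⟨a₀, f, hf, rfl⟩ := exists_eq_minTDS hD hcard
      exact ⟨(a₀, ⟨f, hf⟩), rfl⟩⟩

theorem totalDominationNumber_eq [NeZero k] [NeZero l] [NeZero m] :
    totalDominationNumber (Gklm k l m) = 2 * k * l + 1 :=
  totalDominationNumber_eq_of_forall_le (isTotalDominatingSet_minTDS (a₀ := 0)
    (f := fun _ _ => none) fun _ => ⟨0, rfl⟩) (card_minTDS fun _ => ⟨0, rfl⟩)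
    fun _ => two_mul_mul_add_one_le_card

theorem numMinTotalDomSets_eq [NeZero k] [NeZero l] [NeZero m] :
    numMinTotalDomSets (Gklm k l m) = k * ((m + 1) ^ l - m ^ l) ^ k := by
  rw [numMinTotalDomSets, totalDominationNumber_eq, ← Nat.card_coe_set_eq, Set.coe_ofPred,
    ← Nat.card_congr minTDSEquiv, Nat.card_prod, Nat.card_forall_exists_apply_eq_none]
  simp

end Gklm

/-- The tree `T = G(3,16,3)` has `244` vertices, total domination number `97`, exactly
`3·(4^16 − 3^16)^3` minimum total dominating sets, and this number exceeds
`(391/97)^(97/2) = ((n − γₜ/2)/(γₜ/2))^(γₜ/2)`, disproving the conjecture of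
Henning, Mohr and Rautenbach. -/
theorem Gklm_3_16_3_counterexample :
    Fintype.card
        (Unit ⊕ (Fin 3 ⊕ ((Fin 3 × Fin 16) ⊕ ((Fin 3 × Fin 16) ⊕ (Fin 3 × Fin 16 × Fin 3)))))
      = 244 ∧
    totalDominationNumber (Gklm 3 16 3) = 97 ∧
    numMinTotalDomSets (Gklm 3 16 3) = 3 * (4 ^ 16 - 3 ^ 16) ^ 3 ∧
    ((391 : ℝ) / 97) ^ ((97 : ℝ) / 2) < (numMinTotalDomSets (Gklm 3 16 3) : ℝ) := by
  have hcount : numMinTotalDomSets (Gklm 3 16 3) = 3 * (4 ^ 16 - 3 ^ 16) ^ 3 :=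
    Gklm.numMinTotalDomSets_eq
  refine ⟨by simp, Gklm.totalDominationNumber_eq, hcount, ?_⟩
  have key := Real.rpow_div_two_lt_of_pow_lt_sq (x := 391 / 97) (n := 97)
    (y := numMinTotalDomSets (Gklm 3 16 3)) (by norm_num) (Nat.cast_nonneg _)
    (by rw [hcount]; norm_num)
  simpa only [Nat.cast_ofNat] using key
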